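/- Let M be a matroid on E and let ∨^k M denote the union of k copies of M. Then for any X ⊆ E, the rank of X in ∨^k M equals min over T ⊆ X of (|X \ T| + k · r_M(T)). -/

import Mathlib

/-!
Every `U`-independent set meets `T` in a union of `k` `M`-independent subsets of `T`, which gives
`r_U(X) ≤ |X \ T| + k r_M(T)`. For equality, fix a `U`-basis `B` of `X` and call `T ⊆ X` tight if
`|B ∩ T| = k r_M(T)`. By submodularity tight sets are closed under union, so there is a largest
one, `T`. Each `x ∈ X \ B` lies in a tight set: otherwise the matroid partition theorem (a finite
`I` with `|S| ≤ ∑ i, r_{M_i}(S)` for all `S ⊆ I` is a union of sets `F_i` independent in `M_i`)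
would make `B + x` independent in `U`. Hence `X \ T ⊆ B`, and
`|X \ T| + k r_M(T) = |B \ T| + |B ∩ T| = |B|`.

The partition theorem is proved by induction on `I`. When `e` is added, take the largest
`T ⊆ I - e` with `|T| = ∑ i, r_{M_i}(T)`; some `M_j` does not span `e` by `T`, and one recurses
on `I - e` with `M_j` replaced by `M_j ／ e`.
-/

/-- The rank of a set `X` in a matroid `M`: the size of a maximal independent subset of `X`. -/
noncomputable def mrank {α : Type*} (M : Matroid α) (X : Set α) : ℕ :=
  sSup {n | ∃ I, I ⊆ X ∧ M.Indep I ∧ I.ncard = n}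

open Set Function Finset

namespace Matroid

variable {α : Type*} {M : Matroid α} {I X Y : Set α} {e : α}

/-- `mrank` is meaningful only on finite sets, since an unbounded `sSup` in `ℕ` is `0`. -/
lemma cast_mrank (hX : X.Finite) : (mrank M X : ℕ∞) = M.eRk X := by
  obtain ⟨B, hB⟩ := M.exists_isBasis' X
  have hBfin : B.Finite := hX.subset hB.subset
  have hmax : IsGreatest {n | ∃ I, I ⊆ X ∧ M.Indep I ∧ I.ncard = n} B.ncard := by
    refine ⟨⟨B, hB.subset, hB.indep, rfl⟩, ?_⟩
    rintro _ ⟨I, hIX, hI, rfl⟩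
    have h := hB.encard_eq_eRk ▸ hI.encard_le_eRk_of_subset hIX
    rwa [← (hX.subset hIX).cast_ncard_eq, ← hBfin.cast_ncard_eq, Nat.cast_le] at h
  rw [mrank, hmax.csSup_eq, hBfin.cast_ncard_eq, hB.encard_eq_eRk]

lemma IsBasis'.mrank_eq_ncard (hI : M.IsBasis' I X) (hX : X.Finite) : mrank M X = I.ncard := by
  rw [← Nat.cast_inj (R := ℕ∞), cast_mrank hX, (hX.subset hI.subset).cast_ncard_eq,
    hI.encard_eq_eRk]

lemma mrank_empty (M : Matroid α) : mrank M ∅ = 0 := by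
  simpa using M.empty_indep.isBasis_self.isBasis'.mrank_eq_ncard finite_empty

lemma Indep.ncard_le_mrank (hI : M.Indep I) (hIX : I ⊆ X) (hX : X.Finite) :
    I.ncard ≤ mrank M X := by
  rw [← Nat.cast_le (α := ℕ∞), cast_mrank hX, (hX.subset hIX).cast_ncard_eq]
  exact hI.encard_le_eRk_of_subset hIX

lemma mrank_mono (hXY : X ⊆ Y) (hY : Y.Finite) : mrank M X ≤ mrank M Y := by
  rw [← Nat.cast_le (α := ℕ∞), cast_mrank hY, cast_mrank (hY.subset hXY)]
  exact M.eRk_mono hXY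

lemma mrank_union_add_mrank_inter_le (hX : X.Finite) (hY : Y.Finite) :
    mrank M (X ∪ Y) + mrank M (X ∩ Y) ≤ mrank M X + mrank M Y := by
  rw [← Nat.cast_le (α := ℕ∞)]
  push_cast
  rw [cast_mrank hX, cast_mrank hY, cast_mrank (hX.union hY), cast_mrank (hX.inter_of_left Y),
    add_comm]
  exact M.eRk_inter_add_eRk_union_le X Y

lemma mrank_insert_eq_add_one (he : e ∈ M.E \ M.closure X) (hX : X.Finite) :
    mrank M (insert e X) = mrank M X + 1 := by
  rw [← Nat.cast_inj (R := ℕ∞)]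
  push_cast
  rw [cast_mrank hX, cast_mrank (hX.insert e), eRk_insert_eq_add_one he]

lemma mem_sdiff_closure_of_mrank_lt (h : mrank M X < mrank M (insert e X)) (hX : X.Finite) :
    e ∈ M.E \ M.closure X := by
  rw [← Nat.cast_lt (α := ℕ∞), cast_mrank hX, cast_mrank (hX.insert e)] at h
  by_contra hcon
  rw [mem_sdiff, not_and_or, not_not] at hcon
  obtain heE | hecl := hcon
  · rw [eRk_insert_of_notMem_ground X heE] at h
    exact h.false
  · rw [← eRk_insert_closure_eq, insert_eq_of_mem hecl, eRk_closure_eq] at h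
    exact h.false

lemma IsNonloop.mrank_insert_le_mrank_contract_add_one (he : M.IsNonloop e) (hX : X.Finite) :
    mrank M (insert e X) ≤ mrank (M ／ {e}) X + 1 := by
  obtain ⟨J, hJ, heJ⟩ :=
    he.indep.subset_isBasis'_of_subset (singleton_subset_iff.2 (mem_insert e X))
  rw [Set.singleton_subset_iff] at heJ
  have hJe : (M ／ {e}).Indep (J \ {e}) := by
    rw [he.contractElem_indep_iff, insert_sdiff_singleton, insert_eq_of_mem heJ]
    exact ⟨fun h => h.2 rfl, hJ.indep⟩
  have hJX : J \ {e} ⊆ X := by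
    rw [sdiff_subset_iff, singleton_union]
    exact hJ.subset
  rw [hJ.mrank_eq_ncard (hX.insert e),
    ← ncard_sdiff_singleton_add_one heJ ((hX.insert e).subset hJ.subset)]
  exact Nat.add_le_add_right (hJe.ncard_le_mrank hJX hX) 1

end Matroid

open Matroid

lemma Set.iUnion_update_insert {α ι : Type*} [DecidableEq ι] (F : ι → Set α) (j : ι) (e : α) :
    ⋃ i, update F j (insert e (F j)) i = insert e (⋃ i, F i) := by
  refine subset_antisymm (iUnion_subset fun i => ?_) (insert_subset ?_ (iUnion_mono fun i => ?_))
  · rcases eq_or_ne i j with rfl | hij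
    · simpa using insert_subset_insert (subset_iUnion F i)
    · simpa [hij] using (subset_iUnion F i).trans (subset_insert e _)
  · exact mem_iUnion.2 ⟨j, by simp⟩
  · rcases eq_or_ne i j with rfl | hij
    · simp
    · simp [hij]

lemma Set.Finite.exists_isGreatest_eq_of_modular_le_submodular {α : Type*} {X : Set α}
    {f g : Set α → ℕ} (hX : X.Finite) (h0 : f ∅ = g ∅) (hle : ∀ S ⊆ X, f S ≤ g S)
    (hf : ∀ S ⊆ X, ∀ T ⊆ X, f (S ∪ T) + f (S ∩ T) = f S + f T)
    (hg : ∀ S ⊆ X, ∀ T ⊆ X, g (S ∪ T) + g (S ∩ T) ≤ g S + g T) :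
    ∃ T, IsGreatest {S | S ⊆ X ∧ f S = g S} T := by
  obtain ⟨T, ⟨hTX, hT⟩, hTmax⟩ := (hX.finite_subsets.subset fun S hS => hS.1).exists_maximal
    (⟨∅, empty_subset X, h0⟩ : {S | S ⊆ X ∧ f S = g S}.Nonempty)
  refine ⟨T, ⟨hTX, hT⟩, fun S ⟨hSX, hS⟩ => ?_⟩
  have hunion : T ∪ S ⊆ X := union_subset hTX hSX
  have hf' := hf T hTX S hSX
  have hg' := hg T hTX S hSX
  have hle_union := hle _ hunion
  have hle_inter := hle (T ∩ S) (inter_subset_left.trans hTX)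
  exact union_subset_iff.1 (hTmax ⟨hunion, by omega⟩ subset_union_left) |>.2

theorem exists_indep_cover_of_ncard_le_sum_mrank {α ι : Type*} [Fintype ι] (M : ι → Matroid α)
    {I : Set α} (hI : I.Finite) (h : ∀ S ⊆ I, S.ncard ≤ ∑ i, mrank (M i) S) :
    ∃ F : ι → Set α, (∀ i, (M i).Indep (F i)) ∧ ⋃ i, F i = I := by
  induction I, hI using Set.Finite.induction_on generalizing M with
  | empty => exact ⟨fun _ => ∅, fun i => (M i).empty_indep, iUnion_empty⟩
  | @insert e I heI hI ih =>
    classical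
    obtain ⟨T, ⟨hTI, hT⟩, hTmax⟩ :=
      hI.exists_isGreatest_eq_of_modular_le_submodular (f := ncard)
        (g := fun S => ∑ i, mrank (M i) S) (by simp [mrank_empty])
        (fun S hS => h S (hS.trans (subset_insert e I)))
        (fun S hS T hT => ncard_union_add_ncard_inter S T (hI.subset hS) (hI.subset hT))
        (fun S hS T hT => by
          rw [← sum_add_distrib, ← sum_add_distrib]
          exact sum_le_sum fun i _ => mrank_union_add_mrank_inter_le (hI.subset hS) (hI.subset hT))
    have hTfin : T.Finite := hI.subset hTI
    obtain ⟨j, -, hj⟩ : ∃ j ∈ Finset.univ, mrank (M j) T < mrank (M j) (insert e T) := by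
      refine exists_lt_of_sum_lt (s := univ) (f := fun i => mrank (M i) T) ?_
      have := h (insert e T) (insert_subset_insert hTI)
      rw [ncard_insert_of_notMem (fun h => heI (hTI h)) hTfin] at this
      omega
    have hej := mem_sdiff_closure_of_mrank_lt hj hTfin
    have he : (M j).IsNonloop e := isNonloop_of_notMem_closure hej.2 hej.1
    obtain ⟨F, hF, hFI⟩ := ih (update M j (M j ／ {e})) fun S hS => by
      have hSfin := hI.subset hS
      have hsum : ∑ i, mrank (update M j (M j ／ {e}) i) S + mrank (M j) S =
          ∑ i, mrank (M i) S + mrank (M j ／ {e}) S := by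
        rw [show (fun i => mrank (update M j (M j ／ {e}) i) S) =
            update (fun i => mrank (M i) S) j (mrank (M j ／ {e}) S) from
            funext fun i => apply_update (fun _ N => mrank N S) M j _ i,
          sum_update_of_mem (mem_univ j), sdiff_singleton_eq_erase,
          ← add_sum_erase _ _ (mem_univ j)]
        ring
      have hcontract := he.mrank_insert_le_mrank_contract_add_one hSfin
      -- A tight `S` lies in `T`, so `M j` does not span `e` by `S`; any other `S` has slack.
      by_cases htight : S.ncard = ∑ i, mrank (M i) S
      · have heS : e ∈ (M j).E \ (M j).closure S :=
          ⟨hej.1, fun h => hej.2 (closure_subset_closure _ (hTmax ⟨hS, htight⟩) h)⟩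
        rw [mrank_insert_eq_add_one heS hSfin] at hcontract
        omega
      · have := h S (hS.trans (subset_insert e I))
        have := mrank_mono (M := M j) (subset_insert e S) (hSfin.insert e)
        omega
    refine ⟨update F j (insert e (F j)), fun i => ?_, ?_⟩
    · rcases eq_or_ne i j with rfl | hij
      · simpa using (he.contractElem_indep_iff.1 (by simpa using hF i)).2
      · simpa [hij] using hF i
    · rw [iUnion_update_insert, hFI]

section UnionOfCopies

variable {α : Type*} {k : ℕ} {M U : Matroid α} {B J T X : Set α}

lemma ncard_iUnion_inter_le_card_mul_mrank {ι : Type*} [Fintype ι] {F : ι → Set α}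
    (hF : ∀ i, M.Indep (F i)) (hT : T.Finite) :
    ((⋃ i, F i) ∩ T).ncard ≤ Fintype.card ι * mrank M T := by
  rw [iUnion_inter]
  calc (⋃ i, F i ∩ T).ncard ≤ ∑ i, (F i ∩ T).ncard := ncard_iUnion_le_of_fintype _
    _ ≤ ∑ _i : ι, mrank M T := sum_le_sum fun i _ =>
      ((hF i).subset inter_subset_left).ncard_le_mrank inter_subset_right hT
    _ = Fintype.card ι * mrank M T := by rw [sum_const, card_univ, smul_eq_mul]

variable (hUI : ∀ I, U.Indep I ↔ ∃ F : Fin k → Set α, (∀ i, M.Indep (F i)) ∧ I = ⋃ i, F i)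
include hUI

lemma ncard_inter_le_mul_mrank_of_indep (hJ : U.Indep J) (hT : T.Finite) :
    (J ∩ T).ncard ≤ k * mrank M T := by
  obtain ⟨F, hF, rfl⟩ := (hUI J).1 hJ
  simpa using ncard_iUnion_inter_le_card_mul_mrank hF hT

lemma indep_of_ncard_le_mul_mrank (hJ : J.Finite)
    (h : ∀ S ⊆ J, S.ncard ≤ k * mrank M S) : U.Indep J := by
  obtain ⟨F, hF, hFJ⟩ := exists_indep_cover_of_ncard_le_sum_mrank (fun _ : Fin k => M) hJ
    (by simpa using h)
  exact (hUI J).2 ⟨F, hF, hFJ.symm⟩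

lemma mrank_le_ncard_sdiff_add_mul_mrank (hX : X.Finite) (hTX : T ⊆ X) :
    mrank U X ≤ (X \ T).ncard + k * mrank M T := by
  obtain ⟨B, hB⟩ := U.exists_isBasis' X
  have hBfin := hX.subset hB.subset
  rw [hB.mrank_eq_ncard hX, ← ncard_inter_add_ncard_sdiff_eq_ncard B T hBfin, add_comm]
  exact add_le_add (ncard_le_ncard (sdiff_subset_sdiff_left hB.subset) hX.sdiff)
    (ncard_inter_le_mul_mrank_of_indep hUI hB.indep (hX.subset hTX))

lemma Matroid.IsBasis'.exists_mem_ncard_inter_eq_mul_mrank (hB : U.IsBasis' B X)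
    (hX : X.Finite) {x : α} (hx : x ∈ X \ B) :
    ∃ S ⊆ X, x ∈ S ∧ (B ∩ S).ncard = k * mrank M S := by
  by_contra! hslack
  refine hB.insert_not_indep hx (indep_of_ncard_le_mul_mrank hUI
    ((hX.subset hB.subset).insert x) fun S hS => ?_)
  have hSX : S ⊆ X := hS.trans (insert_subset hx.1 hB.subset)
  have hle := ncard_inter_le_mul_mrank_of_indep hUI hB.indep (hX.subset hSX)
  by_cases hxS : x ∈ S
  · have hBS : B ∩ S = S \ {x} := by
      ext y
      simp only [mem_inter_iff, mem_sdiff, mem_singleton_iff]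
      exact ⟨fun ⟨hyB, hyS⟩ => ⟨hyS, fun h => hx.2 (h ▸ hyB)⟩,
        fun ⟨hyS, hyx⟩ => ⟨(hS hyS).resolve_left hyx, hyS⟩⟩
    have hstrict := hslack S hSX hxS
    rw [hBS] at hle hstrict
    have := ncard_sdiff_singleton_add_one hxS (hX.subset hSX)
    omega
  · rwa [inter_eq_right.2 fun y hy => (hS hy).resolve_left (ne_of_mem_of_not_mem hy hxS)] at hle

lemma exists_ncard_sdiff_add_mul_mrank_eq (hX : X.Finite) :
    ∃ T ⊆ X, (X \ T).ncard + k * mrank M T = mrank U X := by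
  obtain ⟨B, hB⟩ := U.exists_isBasis' X
  have hBfin := hX.subset hB.subset
  obtain ⟨T, ⟨hTX, hT⟩, hTmax⟩ :=
    hX.exists_isGreatest_eq_of_modular_le_submodular (f := fun S => (B ∩ S).ncard)
      (g := fun S => k * mrank M S) (by simp [mrank_empty])
      (fun S hS => ncard_inter_le_mul_mrank_of_indep hUI hB.indep (hX.subset hS))
      (fun S _ T _ => by
        rw [inter_union_distrib_left, inter_inter_distrib_left]
        exact ncard_union_add_ncard_inter _ _ (hBfin.inter_of_left S) (hBfin.inter_of_left T))
      (fun S hS T hT => by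
        simpa [← mul_add] using Nat.mul_le_mul_left k
          (mrank_union_add_mrank_inter_le (M := M) (hX.subset hS) (hX.subset hT)))
  have hXB : X \ B ⊆ T := fun x hx =>
    let ⟨S, hSX, hxS, hS⟩ := hB.exists_mem_ncard_inter_eq_mul_mrank hUI hX hx
    hTmax ⟨hSX, hS⟩ hxS
  have hXT : X \ T = B \ T :=
    subset_antisymm (fun y ⟨hyX, hyT⟩ => ⟨by_contra fun hyB => hyT (hXB ⟨hyX, hyB⟩), hyT⟩)
      (sdiff_subset_sdiff_left hB.subset)
  refine ⟨T, hTX, ?_⟩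
  rw [hB.mrank_eq_ncard hX, hXT, ← hT, ← ncard_inter_add_ncard_sdiff_eq_ncard B T hBfin, add_comm]

end UnionOfCopies

theorem matroid_k_union_rank_general {α : Type*} (k : ℕ) (M U : Matroid α) [M.Finite]
    (hUI : ∀ I, U.Indep I ↔ ∃ F : Fin k → Set α, (∀ i, M.Indep (F i)) ∧ I = ⋃ i, F i)
    (X : Set α) (hX : X ⊆ M.E) :
    mrank U X = sInf {n | ∃ T ⊆ X, n = (X \ T).ncard + k * mrank M T} := by
  have hXfin : X.Finite := M.set_finite X hX
  obtain ⟨T, hTX, hT⟩ := exists_ncard_sdiff_add_mul_mrank_eq hUI hXfin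
  refine le_antisymm (le_csInf ⟨_, T, hTX, rfl⟩ ?_) (Nat.sInf_le ⟨T, hTX, hT.symm⟩)
  rintro _ ⟨T', hT'X, rfl⟩
  exact mrank_le_ncard_sdiff_add_mul_mrank hUI hXfin hT'X

/-- Rank formula for the union of `k` copies of a matroid `M`. -/
theorem matroid_k_union_rank {α : Type*} (k : ℕ) (M U : Matroid α) [M.Finite]
    (hUE : U.E = M.E)
    (hUI : ∀ I, U.Indep I ↔ ∃ F : Fin k → Set α, (∀ i, M.Indep (F i)) ∧ I = ⋃ i, F i)
    (X : Set α) (hX : X ⊆ M.E) :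
    mrank U X = sInf {n | ∃ T ⊆ X, n = (X \ T).ncard + k * mrank M T} :=
  matroid_k_union_rank_general k M U hUI X hX
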